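/- Let H be a real inner product space and let x, y ∈ H be nonzero. Define K(x, y) = ‖x‖·‖y‖·κ( ⟨x, y⟩ / (‖x‖·‖y‖) ). Then √( K(x,x) + K(y,y) − 2·K(x,y) ) ≤ √( min(‖x‖, ‖y‖) · ‖x − y‖ ) + 2·‖x − y‖. This expresses that the kernel mapping Φ of the homogeneous two-layer ReLU NTK satisfies ‖Φ(x) − Φ(y)‖ ≤ √(min(‖x‖,‖y‖)·‖x − y‖) + 2‖x − y‖. -/

import Mathlib

/-!
With `a = ‖x‖`, `b = ‖y‖`, `u = ⟪x, y⟫ / (a b)` and `θ = arccos u`, one has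
`K(x,x) + K(y,y) - 2 K(x,y) = 2‖x - y‖² + 2ab (2u - κ(u))` and
`π (2u - κ(u)) = 2θ cos θ - sin θ ≤ θ cos θ ≤ θ` (as `tan θ ≥ θ`). The quadratic bound
`cos θ ≤ 1 - 2θ²/π²` turns `θ / π` into at most half the chord `√(2(1 - u))`, and
`ab √(2(1 - u)) ≤ √(ab) ‖x - y‖ ≤ (min a b + ‖x - y‖) ‖x - y‖`, because
`√(ab) ≤ max a b = min a b + |a - b|`.
-/

open Real

noncomputable def kappa0 (u : ℝ) : ℝ := (π - Real.arccos u) / π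
noncomputable def kappa1 (u : ℝ) : ℝ :=
  (u * (π - Real.arccos u) + Real.sqrt (1 - u ^ 2)) / π
noncomputable def kappa (u : ℝ) : ℝ := u * kappa0 u + kappa1 u

lemma kappa_eq (u : ℝ) : kappa u = (2 * u * (π - arccos u) + √(1 - u ^ 2)) / π := by
  rw [kappa, kappa0, kappa1]
  ring

lemma kappa_one : kappa 1 = 2 := by
  rw [kappa_eq, arccos_one]
  field_simp
  norm_num

lemma Real.mul_cos_le_sin {θ : ℝ} (h0 : 0 ≤ θ) (hπ : θ ≤ π) : θ * cos θ ≤ sin θ := by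
  rcases le_or_gt (cos θ) 0 with hcos | hcos
  · exact (mul_nonpos_of_nonneg_of_nonpos h0 hcos).trans (sin_nonneg_of_nonneg_of_le_pi h0 hπ)
  · have hθ : θ < π / 2 := by
      by_contra! h
      exact hcos.not_ge (cos_nonpos_of_pi_div_two_le_of_le h (by linarith))
    have := le_tan h0 hθ
    rwa [tan_eq_sin_div_cos, le_div_iff₀ hcos] at this

lemma two_mul_sub_kappa_le {u : ℝ} (h1 : -1 ≤ u) (h2 : u ≤ 1) :
    2 * u - kappa u ≤ √(2 * (1 - u)) / 2 := by
  set θ := arccos u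
  have hθ0 : 0 ≤ θ := arccos_nonneg u
  have hcos : cos θ = u := cos_arccos h1 h2
  have hsin : sin θ = √(1 - u ^ 2) := sin_arccos u
  have hsub : 2 * u - kappa u = (2 * u * θ - √(1 - u ^ 2)) / π := by
    rw [kappa_eq]
    field_simp
    ring
  have hnum : 2 * u * θ - √(1 - u ^ 2) ≤ θ := by
    have := Real.mul_cos_le_sin hθ0 (arccos_le_pi u)
    rw [hcos, hsin] at this
    nlinarith
  have hchord : 2 * θ / π ≤ √(2 * (1 - u)) := by
    have := cos_le_one_sub_mul_cos_sq (x := θ) (by rw [abs_of_nonneg hθ0]; exact arccos_le_pi u)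
    rw [hcos] at this
    rw [le_sqrt (by positivity) (by linarith)]
    have : (2 * θ / π) ^ 2 = 2 * (2 / π ^ 2 * θ ^ 2) := by ring
    linarith
  calc 2 * u - kappa u = (2 * u * θ - √(1 - u ^ 2)) / π := hsub
    _ ≤ θ / π := by gcongr
    _ ≤ √(2 * (1 - u)) / 2 := by linarith [show 2 * θ / π = 2 * (θ / π) by ring]

lemma sqrt_mul_le_min_add_abs_sub {a b : ℝ} (ha : 0 ≤ a) (hb : 0 ≤ b) :
    √(a * b) ≤ min a b + |a - b| := by
  rw [← max_sub_min_eq_abs', add_sub_cancel]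
  calc √(a * b) ≤ √(max a b * max a b) := by gcongr <;> simp
    _ = max a b := sqrt_mul_self (by positivity)

section Kernel

variable {H : Type*} [NormedAddCommGroup H] [InnerProductSpace ℝ H]

noncomputable def ntk (x y : H) : ℝ := ‖x‖ * ‖y‖ * kappa (inner ℝ x y / (‖x‖ * ‖y‖))

lemma ntk_self {x : H} (hx : x ≠ 0) : ntk x x = 2 * ‖x‖ ^ 2 := by
  have : ‖x‖ ≠ 0 := norm_ne_zero_iff.mpr hx
  rw [ntk, real_inner_self_eq_norm_sq, ← sq, div_self (by positivity), kappa_one]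
  ring

lemma norm_mul_norm_mul_sqrt_le {x y : H} (hx : x ≠ 0) (hy : y ≠ 0) :
    ‖x‖ * ‖y‖ * √(2 * (1 - inner ℝ x y / (‖x‖ * ‖y‖))) ≤ √(‖x‖ * ‖y‖) * ‖x - y‖ := by
  have hab : 0 < ‖x‖ * ‖y‖ := by positivity
  have hsplit : ‖x‖ * ‖y‖ * √(2 * (1 - inner ℝ x y / (‖x‖ * ‖y‖)))
      = √(‖x‖ * ‖y‖) * √(2 * (‖x‖ * ‖y‖ - inner ℝ x y)) := by
    have : 2 * (‖x‖ * ‖y‖ - inner ℝ x y) = ‖x‖ * ‖y‖ * (2 * (1 - inner ℝ x y / (‖x‖ * ‖y‖))) := by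
      field_simp
    rw [this, sqrt_mul hab.le, ← mul_assoc, mul_self_sqrt hab.le]
  rw [hsplit]
  gcongr
  rw [sqrt_le_left (norm_nonneg _), norm_sub_sq_real]
  nlinarith [sq_nonneg (‖x‖ - ‖y‖)]

lemma ntk_sub_le {x y : H} (hx : x ≠ 0) (hy : y ≠ 0) :
    ntk x x + ntk y y - 2 * ntk x y ≤ 2 * ‖x - y‖ ^ 2 + √(‖x‖ * ‖y‖) * ‖x - y‖ := by
  have hab : 0 < ‖x‖ * ‖y‖ := by positivity
  have hinner : ‖x‖ * ‖y‖ * (inner ℝ x y / (‖x‖ * ‖y‖)) = inner ℝ x y :=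
    mul_div_cancel₀ _ hab.ne'
  obtain ⟨hu₁, hu₂⟩ := abs_le.mp (abs_real_inner_div_norm_mul_norm_le_one x y)
  have hkappa := mul_le_mul_of_nonneg_left (two_mul_sub_kappa_le hu₁ hu₂) hab.le
  have hchord := norm_mul_norm_mul_sqrt_le hx hy
  rw [ntk_self hx, ntk_self hy, ntk, norm_sub_sq_real]
  linarith

end Kernel

theorem ntk_homogeneous_smoothness {H : Type*} [NormedAddCommGroup H]
    [InnerProductSpace ℝ H] (x y : H) (hx : x ≠ 0) (hy : y ≠ 0)
    (K : H → H → ℝ)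
    (hK : ∀ z w : H, K z w = ‖z‖ * ‖w‖ * kappa ((inner ℝ z w : ℝ) / (‖z‖ * ‖w‖))) :
    Real.sqrt (K x x + K y y - 2 * K x y)
      ≤ Real.sqrt (min ‖x‖ ‖y‖ * ‖x - y‖) + 2 * ‖x - y‖ := by
  obtain rfl : K = ntk := funext₂ hK
  set d := ‖x - y‖
  have hgeom : √(‖x‖ * ‖y‖) ≤ min ‖x‖ ‖y‖ + d := by
    grw [sqrt_mul_le_min_add_abs_sub (norm_nonneg x) (norm_nonneg y), abs_norm_sub_norm_le]
  have hmd : √(min ‖x‖ ‖y‖ * d) ^ 2 = min ‖x‖ ‖y‖ * d := sq_sqrt (by positivity)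
  rw [sqrt_le_left (by positivity)]
  calc ntk x x + ntk y y - 2 * ntk x y ≤ 2 * d ^ 2 + √(‖x‖ * ‖y‖) * d := ntk_sub_le hx hy
    _ ≤ 2 * d ^ 2 + (min ‖x‖ ‖y‖ + d) * d := by gcongr
    _ ≤ (√(min ‖x‖ ‖y‖ * d) + 2 * d) ^ 2 := by
      nlinarith [sqrt_nonneg (min ‖x‖ ‖y‖ * d), norm_nonneg (x - y)]
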